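/- Let L be an infinitely distributive lattice and Y ⊆ L a sublattice satisfying Properties (A) and (B). Then the 1-uO-adherence Y^uO_1 equals the 1-O-adherence Y^O_1, and this set is simultaneously O-closed and uO-closed. -/
import Mathlib


universe u v w

section Defs

variable {L : Type u} [Lattice L]

/-- O-convergence of a net indexed by a preordered (directed) index type. -/
def OConv {Γ : Type v} [Preorder Γ] (f : Γ → L) (x : L) : Prop :=
  ∃ M N : Set L, M.Nonempty ∧ DirectedOn (· ≤ ·) M ∧ N.Nonempty ∧ DirectedOn (· ≥ ·) N ∧
    IsLUB M x ∧ IsGLB N x ∧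
    ∀ m ∈ M, ∀ n ∈ N, ∃ γ₀ : Γ, ∀ γ : Γ, γ₀ ≤ γ → f γ ∈ Set.Icc m n

/-- unbounded order convergence of a net -/
def UOConv {Γ : Type v} [Preorder Γ] (f : Γ → L) (x : L) : Prop :=
  ∀ s t : L, s ≤ t → OConv (fun γ => (f γ ⊓ t) ⊔ s) ((x ⊓ t) ⊔ s)

/-- infinitely distributive lattice -/
def InfDistrib (L : Type u) [Lattice L] : Prop :=
  (∀ (x : L) (S : Set L) (a : L), IsGLB S a → IsGLB ((fun s => x ⊔ s) '' S) (x ⊔ a)) ∧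
  (∀ (x : L) (S : Set L) (a : L), IsLUB S a → IsLUB ((fun s => x ⊓ s) '' S) (x ⊓ a))

/-- sublattice (as a set) -/
def IsSubl (Y : Set L) : Prop :=
  ∀ a ∈ Y, ∀ b ∈ Y, a ⊔ b ∈ Y ∧ a ⊓ b ∈ Y

/-- 1-O-adherence -/
def OAdh1 (X : Set L) : Set L :=
  {x | ∃ (Γ : Type u) (_ : Preorder Γ), IsDirected Γ (· ≤ ·) ∧ Nonempty Γ ∧
      ∃ f : Γ → L, (∀ γ, f γ ∈ X) ∧ OConv f x}

/-- 1-uO-adherence -/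
def UOAdh1 (X : Set L) : Set L :=
  {x | ∃ (Γ : Type u) (_ : Preorder Γ), IsDirected Γ (· ≤ ·) ∧ Nonempty Γ ∧
      ∃ f : Γ → L, (∀ γ, f γ ∈ X) ∧ UOConv f x}

def OClosedSet (X : Set L) : Prop := OAdh1 X = X
def UOClosedSet (X : Set L) : Prop := UOAdh1 X = X

end Defs

/-- upper bounds taken within the sublattice `Y` : `A^{+_Y}` -/
def ubIn {L : Type u} [Lattice L] (Y A : Set L) : Set L := upperBounds A ∩ Y

/-- lower bounds taken within the sublattice `Y` : `A^{-_Y}` -/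
def lbIn {L : Type u} [Lattice L] (Y A : Set L) : Set L := lowerBounds A ∩ Y

/-- a lower cut of `L`, i.e. an element of the Dedekind-MacNeille completion DM(L). -/
def IsLCut {L : Type u} [Lattice L] (D : Set L) : Prop :=
  lowerBounds (upperBounds D) = D

/-- a lower cut of the sublattice `Y` (bounds taken in `Y`), i.e. an element of DM(Y). -/
def IsLCutIn {L : Type u} [Lattice L] (Y A : Set L) : Prop :=
  A ⊆ Y ∧ lbIn Y (ubIn Y A) = A

/-- Property (A): for every `A ⊆ Y` and every lower bound `x` of `A` there is a lower
bound `y` of `A` lying in `Y` with `x ≤ y`. -/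
def PropertyA {L : Type u} [Lattice L] (Y : Set L) : Prop :=
  ∀ A ⊆ Y, ∀ x ∈ lowerBounds A, ∃ y ∈ lowerBounds A ∩ Y, x ≤ y

/-- Property (B): for every `A ⊆ Y` and every upper bound `x` of `A` there is an upper
bound `y` of `A` lying in `Y` with `y ≤ x`. -/
def PropertyB {L : Type u} [Lattice L] (Y : Set L) : Prop :=
  ∀ A ⊆ Y, ∀ x ∈ upperBounds A, ∃ y ∈ upperBounds A ∩ Y, y ≤ x

section Aux

variable {L : Type u} [Lattice L]

theorem stmt19_inf_sup_distrib (hL : InfDistrib L) (x a b : L) :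
    x ⊓ (a ⊔ b) = (x ⊓ a) ⊔ (x ⊓ b) := by
  have h := hL.2 x {a, b} (a ⊔ b) isLUB_pair
  rw [Set.image_pair] at h
  exact h.unique isLUB_pair

theorem stmt19_sup_inf_distrib (hL : InfDistrib L) (x a b : L) :
    x ⊔ (a ⊓ b) = (x ⊔ a) ⊓ (x ⊔ b) := by
  have h := hL.1 x {a, b} (a ⊓ b) isGLB_pair
  rw [Set.image_pair] at h
  exact h.unique isGLB_pair

theorem stmt19_oconv_const {Γ : Type v} [Preorder Γ] [Nonempty Γ] (x : L) :
    OConv (fun _ : Γ => x) x := by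
  refine ⟨{x}, {x}, Set.singleton_nonempty x, ?_, Set.singleton_nonempty x, ?_,
    isLUB_singleton, isGLB_singleton, ?_⟩
  · intro a ha b hb
    rw [Set.mem_singleton_iff] at ha hb; subst ha; subst hb
    exact ⟨_, rfl, le_rfl, le_rfl⟩
  · intro a ha b hb
    rw [Set.mem_singleton_iff] at ha hb; subst ha; subst hb
    exact ⟨_, rfl, le_rfl, le_rfl⟩
  · intro m hm n hn
    rw [Set.mem_singleton_iff] at hm hn; subst hm; subst hn
    exact ⟨Classical.arbitrary Γ, fun γ _ => ⟨le_rfl, le_rfl⟩⟩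

def stmt19_PairIdx {L : Type u} [Lattice L] (M N : Set L) : Type u :=
  {p : L × L // p.1 ∈ M ∧ p.2 ∈ N}

instance {L : Type u} [Lattice L] (M N : Set L) : Preorder (stmt19_PairIdx M N) where
  le p q := p.1.1 ≤ q.1.1 ∧ q.1.2 ≤ p.1.2
  le_refl p := ⟨le_rfl, le_rfl⟩
  le_trans p q r h h' := ⟨h.1.trans h'.1, h'.2.trans h.2⟩

theorem stmt19_oadh_char (X : Set L) (x : L) :
    x ∈ OAdh1 X ↔ ∃ M N : Set L, M.Nonempty ∧ DirectedOn (· ≤ ·) M ∧ N.Nonempty ∧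
      DirectedOn (· ≥ ·) N ∧ IsLUB M x ∧ IsGLB N x ∧
      ∀ m ∈ M, ∀ n ∈ N, (X ∩ Set.Icc m n).Nonempty := by
  constructor
  · rintro ⟨Γ, _, hdir, hne, f, hf, M, N, hMne, hMdir, hNne, hNdir, hlub, hglb, hev⟩
    refine ⟨M, N, hMne, hMdir, hNne, hNdir, hlub, hglb, fun m hm n hn => ?_⟩
    obtain ⟨γ₀, h⟩ := hev m hm n hn
    exact ⟨f γ₀, hf γ₀, h γ₀ le_rfl⟩
  · rintro ⟨M, N, hMne, hMdir, hNne, hNdir, hlub, hglb, hint⟩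
    refine ⟨stmt19_PairIdx M N, inferInstance, ⟨fun p q => ?_⟩,
      ⟨⟨(hMne.some, hNne.some), hMne.some_mem, hNne.some_mem⟩⟩,
      fun p => (hint p.1.1 p.2.1 p.1.2 p.2.2).some,
      fun p => (hint p.1.1 p.2.1 p.1.2 p.2.2).some_mem.1,
      M, N, hMne, hMdir, hNne, hNdir, hlub, hglb, fun m hm n hn => ?_⟩
    · obtain ⟨m, hm, h1, h2⟩ := hMdir p.1.1 p.2.1 q.1.1 q.2.1
      obtain ⟨n, hn, h3, h4⟩ := hNdir p.1.2 p.2.2 q.1.2 q.2.2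
      exact ⟨⟨(m, n), hm, hn⟩, ⟨h1, h3⟩, ⟨h2, h4⟩⟩
    · refine ⟨⟨(m, n), hm, hn⟩, fun γ hγ => ?_⟩
      have h := (hint γ.1.1 γ.2.1 γ.1.2 γ.2.2).some_mem.2
      exact ⟨hγ.1.trans h.1, h.2.trans hγ.2⟩

theorem stmt19_oconv_trunc (hL : InfDistrib L) {Γ : Type v} [Preorder Γ] {f : Γ → L} {x : L}
    (h : OConv f x) (s t : L) : OConv (fun γ => (f γ ⊓ t) ⊔ s) ((x ⊓ t) ⊔ s) := by
  obtain ⟨M, N, hMne, hMdir, hNne, hNdir, hlub, hglb, hev⟩ := h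
  set φ : L → L := fun z => (z ⊓ t) ⊔ s with hφdef
  have hφ : Monotone φ := fun a b hab => sup_le_sup_right (inf_le_inf_right t hab) s
  refine ⟨φ '' M, φ '' N, hMne.image φ, ?_, hNne.image φ, ?_, ?_, ?_, ?_⟩
  · rintro _ ⟨a, ha, rfl⟩ _ ⟨b, hb, rfl⟩
    obtain ⟨c, hc, h1, h2⟩ := hMdir a ha b hb
    exact ⟨φ c, ⟨c, hc, rfl⟩, hφ h1, hφ h2⟩
  · rintro _ ⟨a, ha, rfl⟩ _ ⟨b, hb, rfl⟩
    obtain ⟨c, hc, h1, h2⟩ := hNdir a ha b hb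
    exact ⟨φ c, ⟨c, hc, rfl⟩, hφ h1, hφ h2⟩
  · constructor
    · rintro _ ⟨m, hm, rfl⟩
      exact hφ (hlub.1 hm)
    · intro u hu
      have hs : s ≤ u := le_trans le_sup_right (hu ⟨hMne.some, hMne.some_mem, rfl⟩)
      have h2 : IsLUB ((fun z => t ⊓ z) '' M) (t ⊓ x) := hL.2 t M x hlub
      have h3 : t ⊓ x ≤ u := by
        refine h2.2 ?_
        rintro _ ⟨m, hm, rfl⟩
        calc t ⊓ m = m ⊓ t := inf_comm t m
          _ ≤ (m ⊓ t) ⊔ s := le_sup_left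
          _ ≤ u := hu ⟨m, hm, rfl⟩
      refine sup_le ?_ hs
      rw [inf_comm]; exact h3
  · constructor
    · rintro _ ⟨n, hn, rfl⟩
      exact hφ (hglb.1 hn)
    · intro l hl
      have g1 : IsGLB ((fun z => t ⊓ z) '' N) (t ⊓ x) := by
        constructor
        · rintro _ ⟨n, hn, rfl⟩
          exact inf_le_inf_left t (hglb.1 hn)
        · intro l' hl'
          refine le_inf (le_trans (hl' ⟨hNne.some, hNne.some_mem, rfl⟩) inf_le_left)
            (hglb.2 fun n hn => le_trans (hl' ⟨n, hn, rfl⟩) inf_le_right)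
      have g2 := hL.1 s _ _ g1
      have h4 : l ≤ s ⊔ (t ⊓ x) := by
        refine g2.2 ?_
        rintro _ ⟨_, ⟨n, hn, rfl⟩, rfl⟩
        show l ≤ s ⊔ (t ⊓ n)
        rw [sup_comm s (t ⊓ n), inf_comm t n]
        exact hl ⟨n, hn, rfl⟩
      rwa [sup_comm s (t ⊓ x), inf_comm t x] at h4
  · rintro _ ⟨m, hm, rfl⟩ _ ⟨n, hn, rfl⟩
    obtain ⟨γ₀, hγ₀⟩ := hev m hm n hn
    exact ⟨γ₀, fun γ hγ => ⟨hφ (hγ₀ γ hγ).1, hφ (hγ₀ γ hγ).2⟩⟩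

theorem stmt19_oconv_uoconv (hL : InfDistrib L) {Γ : Type v} [Preorder Γ] {f : Γ → L} {x : L}
    (h : OConv f x) : UOConv f x := fun s t _ => stmt19_oconv_trunc hL h s t

theorem stmt19_uo_le_of_inf_le (hL : InfDistrib L) {Γ : Type v} [Preorder Γ] [Nonempty Γ]
    {f : Γ → L} {x u : L} (h : UOConv f x) (hu : ∀ γ, x ⊓ f γ ≤ u) : x ≤ u := by
  obtain ⟨M, N, hMne, hMdir, hNne, hNdir, hlub, hglb, hev⟩ :=
    h (x ⊓ u) (x ⊔ u) (le_trans inf_le_left le_sup_left)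
  have hx : (x ⊓ (x ⊔ u)) ⊔ (x ⊓ u) = x := by rw [inf_sup_self, sup_inf_self]
  rw [hx] at hlub
  have key : ∀ γ, (f γ ⊓ (x ⊔ u)) ⊔ (x ⊓ u) ≤ u := by
    intro γ
    refine sup_le ?_ inf_le_right
    rw [stmt19_inf_sup_distrib hL]
    refine sup_le ?_ inf_le_right
    rw [inf_comm]; exact hu γ
  refine hlub.2 fun m hm => ?_
  obtain ⟨γ₀, hγ₀⟩ := hev m hm hNne.some hNne.some_mem
  exact le_trans (hγ₀ γ₀ le_rfl).1 (key γ₀)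

theorem stmt19_uo_le_of_le_sup (hL : InfDistrib L) {Γ : Type v} [Preorder Γ] [Nonempty Γ]
    {f : Γ → L} {x l : L} (h : UOConv f x) (hl : ∀ γ, l ≤ x ⊔ f γ) : l ≤ x := by
  obtain ⟨M, N, hMne, hMdir, hNne, hNdir, hlub, hglb, hev⟩ :=
    h (x ⊓ l) (x ⊔ l) (le_trans inf_le_left le_sup_left)
  have hx : (x ⊓ (x ⊔ l)) ⊔ (x ⊓ l) = x := by rw [inf_sup_self, sup_inf_self]
  rw [hx] at hglb
  have key : ∀ γ, l ≤ (f γ ⊓ (x ⊔ l)) ⊔ (x ⊓ l) := by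
    intro γ
    have h1 : l ≤ (x ⊓ l) ⊔ f γ := by
      calc l = l ⊓ (x ⊔ f γ) := (inf_eq_left.mpr (hl γ)).symm
        _ = (l ⊓ x) ⊔ (l ⊓ f γ) := stmt19_inf_sup_distrib hL l x (f γ)
        _ ≤ (x ⊓ l) ⊔ f γ := sup_le_sup (le_of_eq (inf_comm l x)) inf_le_right
    calc l ≤ ((x ⊓ l) ⊔ f γ) ⊓ ((x ⊓ l) ⊔ (x ⊔ l)) :=
          le_inf h1 (le_trans le_sup_right le_sup_right)
      _ = (x ⊓ l) ⊔ (f γ ⊓ (x ⊔ l)) := (stmt19_sup_inf_distrib hL (x ⊓ l) (f γ) (x ⊔ l)).symm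
      _ = (f γ ⊓ (x ⊔ l)) ⊔ (x ⊓ l) := sup_comm _ _
  refine hglb.2 fun n hn => ?_
  obtain ⟨γ₀, hγ₀⟩ := hev hMne.some hMne.some_mem n hn
  exact le_trans (key γ₀) (hγ₀ γ₀ le_rfl).2

def stmt19_Cset {L : Type u} [Lattice L] (Y : Set L) : Set L :=
  {x | ∃ M N : Set L, M ⊆ Y ∧ N ⊆ Y ∧ M.Nonempty ∧ DirectedOn (· ≤ ·) M ∧
    N.Nonempty ∧ DirectedOn (· ≥ ·) N ∧ IsLUB M x ∧ IsGLB N x}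

theorem stmt19_subset_cset {Y : Set L} {y : L} (hy : y ∈ Y) : y ∈ stmt19_Cset Y := by
  have hdir : DirectedOn (· ≤ ·) ({y} : Set L) := by
    intro a ha b hb
    rw [Set.mem_singleton_iff] at ha hb; subst ha; subst hb
    exact ⟨_, rfl, le_rfl, le_rfl⟩
  have hdir' : DirectedOn (· ≥ ·) ({y} : Set L) := by
    intro a ha b hb
    rw [Set.mem_singleton_iff] at ha hb; subst ha; subst hb
    exact ⟨_, rfl, le_rfl, le_rfl⟩
  exact ⟨{y}, {y}, Set.singleton_subset_iff.mpr hy, Set.singleton_subset_iff.mpr hy,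
    Set.singleton_nonempty y, hdir, Set.singleton_nonempty y, hdir',
    isLUB_singleton, isGLB_singleton⟩

theorem stmt19_cset_subset_oadh (Y : Set L) : stmt19_Cset Y ⊆ OAdh1 Y := by
  intro x hx
  obtain ⟨M, N, hMY, hNY, hMne, hMdir, hNne, hNdir, hlub, hglb⟩ := hx
  rw [stmt19_oadh_char]
  refine ⟨M, N, hMne, hMdir, hNne, hNdir, hlub, hglb, fun m hm n hn => ?_⟩
  exact ⟨m, hMY hm, le_rfl, (hlub.1 hm).trans (hglb.1 hn)⟩

theorem stmt19_oadh_cset_subset {Y : Set L} (hY : IsSubl Y) (hPA : PropertyA Y)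
    (hPB : PropertyB Y) : OAdh1 (stmt19_Cset Y) ⊆ stmt19_Cset Y := by
  intro x hx
  rw [stmt19_oadh_char] at hx
  obtain ⟨M, N, hMne, hMdir, hNne, hNdir, hlub, hglb, hint⟩ := hx
  have hz : ∀ m ∈ M, ∀ n ∈ N, ∃ z, z ∈ stmt19_Cset Y ∧ m ≤ z ∧ z ≤ n := by
    intro m hm n hn
    obtain ⟨z, hz1, hz2⟩ := hint m hm n hn
    exact ⟨z, hz1, hz2.1, hz2.2⟩
  have claim1 : ∀ m ∈ M, ∃ y, y ∈ Y ∧ y ∈ lowerBounds N ∧ m ≤ y := by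
    intro m hm
    choose z hzC hmz hzn using hz m hm
    have hzC' : ∀ n (hn : n ∈ N), ∃ Mz Nz : Set L, Mz ⊆ Y ∧ Nz ⊆ Y ∧ Mz.Nonempty ∧
        DirectedOn (· ≤ ·) Mz ∧ Nz.Nonempty ∧ DirectedOn (· ≥ ·) Nz ∧
        IsLUB Mz (z n hn) ∧ IsGLB Nz (z n hn) := fun n hn => hzC n hn
    choose Mz Nz hMzY hNzY hMzne hMzdir hNzne hNzdir hMzlub hNzglb using hzC'
    have hAY : {w | ∃ n, ∃ hn : n ∈ N, w ∈ Nz n hn} ⊆ Y := by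
      rintro w ⟨n, hn, hw⟩; exact hNzY n hn hw
    have hmA : m ∈ lowerBounds {w | ∃ n, ∃ hn : n ∈ N, w ∈ Nz n hn} := by
      rintro w ⟨n, hn, hw⟩
      exact le_trans (hmz n hn) ((hNzglb n hn).1 hw)
    obtain ⟨y, ⟨hylb, hyY⟩, hmy⟩ := hPA _ hAY m hmA
    refine ⟨y, hyY, fun n hn => ?_, hmy⟩
    exact le_trans ((hNzglb n hn).2 fun w hw => hylb ⟨n, hn, hw⟩) (hzn n hn)
  have claim2 : ∀ n ∈ N, ∃ y, y ∈ Y ∧ y ∈ upperBounds M ∧ y ≤ n := by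
    intro n hn
    choose z hzC hmz hzn using fun m (hm : m ∈ M) => hz m hm n hn
    have hzC' : ∀ m (hm : m ∈ M), ∃ Mz Nz : Set L, Mz ⊆ Y ∧ Nz ⊆ Y ∧ Mz.Nonempty ∧
        DirectedOn (· ≤ ·) Mz ∧ Nz.Nonempty ∧ DirectedOn (· ≥ ·) Nz ∧
        IsLUB Mz (z m hm) ∧ IsGLB Nz (z m hm) := fun m hm => hzC m hm
    choose Mz Nz hMzY hNzY hMzne hMzdir hNzne hNzdir hMzlub hNzglb using hzC'
    have hAY : {w | ∃ m, ∃ hm : m ∈ M, w ∈ Mz m hm} ⊆ Y := by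
      rintro w ⟨m, hm, hw⟩; exact hMzY m hm hw
    have hnA : n ∈ upperBounds {w | ∃ m, ∃ hm : m ∈ M, w ∈ Mz m hm} := by
      rintro w ⟨m, hm, hw⟩
      exact le_trans ((hMzlub m hm).1 hw) (hzn m hm)
    obtain ⟨y, ⟨hyub, hyY⟩, hyn⟩ := hPB _ hAY n hnA
    refine ⟨y, hyY, fun m hm => ?_, hyn⟩
    exact le_trans (hmz m hm) ((hMzlub m hm).2 fun w hw => hyub ⟨m, hm, hw⟩)
  obtain ⟨m₀, hm₀⟩ := hMne
  obtain ⟨n₀, hn₀⟩ := hNne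
  obtain ⟨y₀, hy₀Y, hy₀lb, _⟩ := claim1 m₀ hm₀
  obtain ⟨w₀, hw₀Y, hw₀ub, _⟩ := claim2 n₀ hn₀
  refine ⟨Y ∩ lowerBounds N, Y ∩ upperBounds M, Set.inter_subset_left, Set.inter_subset_left,
    ⟨y₀, hy₀Y, hy₀lb⟩, ?_, ⟨w₀, hw₀Y, hw₀ub⟩, ?_, ?_, ?_⟩
  · rintro a ⟨haY, halb⟩ b ⟨hbY, hblb⟩
    exact ⟨a ⊔ b, ⟨(hY a haY b hbY).1, fun n hn => sup_le (halb hn) (hblb hn)⟩,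
      le_sup_left, le_sup_right⟩
  · rintro a ⟨haY, haub⟩ b ⟨hbY, hbub⟩
    exact ⟨a ⊓ b, ⟨(hY a haY b hbY).2, fun m hm => le_inf (haub hm) (hbub hm)⟩,
      inf_le_left, inf_le_right⟩
  · constructor
    · rintro y ⟨hyY, hylb⟩
      exact hglb.2 hylb
    · intro u hu
      refine hlub.2 fun m hm => ?_
      obtain ⟨y, hyY, hylb, hmy⟩ := claim1 m hm
      exact le_trans hmy (hu ⟨hyY, hylb⟩)
  · constructor
    · rintro y ⟨hyY, hyub⟩
      exact hlub.2 hyub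
    · intro l hl
      refine hglb.2 fun n hn => ?_
      obtain ⟨y, hyY, hyub, hyn⟩ := claim2 n hn
      exact le_trans (hl ⟨hyY, hyub⟩) hyn

theorem stmt19_cset_subl (hL : InfDistrib L) {Y : Set L} (hY : IsSubl Y) :
    IsSubl (stmt19_Cset Y) := by
  intro a ha b hb
  obtain ⟨M, N, hMY, hNY, hMne, hMdir, hNne, hNdir, hlub, hglb⟩ := ha
  obtain ⟨M', N', hMY', hNY', hMne', hMdir', hNne', hNdir', hlub', hglb'⟩ := hb
  constructor
  · refine ⟨Set.image2 (· ⊔ ·) M M', Set.image2 (· ⊔ ·) N N', ?_, ?_,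
      hMne.image2 hMne', ?_, hNne.image2 hNne', ?_, ?_, ?_⟩
    · rintro _ ⟨m, hm, m', hm', rfl⟩
      exact (hY m (hMY hm) m' (hMY' hm')).1
    · rintro _ ⟨n, hn, n', hn', rfl⟩
      exact (hY n (hNY hn) n' (hNY' hn')).1
    · rintro _ ⟨m₁, hm₁, m₁', hm₁', rfl⟩ _ ⟨m₂, hm₂, m₂', hm₂', rfl⟩
      obtain ⟨m₃, hm₃, h1, h2⟩ := hMdir m₁ hm₁ m₂ hm₂
      obtain ⟨m₃', hm₃', h1', h2'⟩ := hMdir' m₁' hm₁' m₂' hm₂'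
      exact ⟨m₃ ⊔ m₃', Set.mem_image2_of_mem hm₃ hm₃', sup_le_sup h1 h1', sup_le_sup h2 h2'⟩
    · rintro _ ⟨n₁, hn₁, n₁', hn₁', rfl⟩ _ ⟨n₂, hn₂, n₂', hn₂', rfl⟩
      obtain ⟨n₃, hn₃, h1, h2⟩ := hNdir n₁ hn₁ n₂ hn₂
      obtain ⟨n₃', hn₃', h1', h2'⟩ := hNdir' n₁' hn₁' n₂' hn₂'
      exact ⟨n₃ ⊔ n₃', Set.mem_image2_of_mem hn₃ hn₃', sup_le_sup h1 h1', sup_le_sup h2 h2'⟩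
    · constructor
      · rintro _ ⟨m, hm, m', hm', rfl⟩
        exact sup_le_sup (hlub.1 hm) (hlub'.1 hm')
      · intro u hu
        refine sup_le (hlub.2 fun m hm => ?_) (hlub'.2 fun m' hm' => ?_)
        · exact le_trans le_sup_left (hu (Set.mem_image2_of_mem hm hMne'.some_mem))
        · exact le_trans le_sup_right (hu (Set.mem_image2_of_mem hMne.some_mem hm'))
    · constructor
      · rintro _ ⟨n, hn, n', hn', rfl⟩
        exact sup_le_sup (hglb.1 hn) (hglb'.1 hn')
      · intro l hl
        have step1 : ∀ n ∈ N, l ≤ n ⊔ b := by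
          intro n hn
          refine (hL.1 n N' b hglb').2 ?_
          rintro _ ⟨n', hn', rfl⟩
          exact hl (Set.mem_image2_of_mem hn hn')
        have h2 : l ≤ b ⊔ a := by
          refine (hL.1 b N a hglb).2 ?_
          rintro _ ⟨n, hn, rfl⟩
          show l ≤ b ⊔ n
          rw [sup_comm b n]
          exact step1 n hn
        exact h2.trans (sup_comm b a).le
  · refine ⟨Set.image2 (· ⊓ ·) M M', Set.image2 (· ⊓ ·) N N', ?_, ?_,
      hMne.image2 hMne', ?_, hNne.image2 hNne', ?_, ?_, ?_⟩
    · rintro _ ⟨m, hm, m', hm', rfl⟩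
      exact (hY m (hMY hm) m' (hMY' hm')).2
    · rintro _ ⟨n, hn, n', hn', rfl⟩
      exact (hY n (hNY hn) n' (hNY' hn')).2
    · rintro _ ⟨m₁, hm₁, m₁', hm₁', rfl⟩ _ ⟨m₂, hm₂, m₂', hm₂', rfl⟩
      obtain ⟨m₃, hm₃, h1, h2⟩ := hMdir m₁ hm₁ m₂ hm₂
      obtain ⟨m₃', hm₃', h1', h2'⟩ := hMdir' m₁' hm₁' m₂' hm₂'
      exact ⟨m₃ ⊓ m₃', Set.mem_image2_of_mem hm₃ hm₃', inf_le_inf h1 h1', inf_le_inf h2 h2'⟩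
    · rintro _ ⟨n₁, hn₁, n₁', hn₁', rfl⟩ _ ⟨n₂, hn₂, n₂', hn₂', rfl⟩
      obtain ⟨n₃, hn₃, h1, h2⟩ := hNdir n₁ hn₁ n₂ hn₂
      obtain ⟨n₃', hn₃', h1', h2'⟩ := hNdir' n₁' hn₁' n₂' hn₂'
      exact ⟨n₃ ⊓ n₃', Set.mem_image2_of_mem hn₃ hn₃', inf_le_inf h1 h1', inf_le_inf h2 h2'⟩
    · constructor
      · rintro _ ⟨m, hm, m', hm', rfl⟩
        exact inf_le_inf (hlub.1 hm) (hlub'.1 hm')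
      · intro u hu
        have step1 : ∀ m ∈ M, m ⊓ b ≤ u := by
          intro m hm
          refine (hL.2 m M' b hlub').2 ?_
          rintro _ ⟨m', hm', rfl⟩
          exact hu (Set.mem_image2_of_mem hm hm')
        have h2 : b ⊓ a ≤ u := by
          refine (hL.2 b M a hlub).2 ?_
          rintro _ ⟨m, hm, rfl⟩
          show b ⊓ m ≤ u
          rw [inf_comm b m]
          exact step1 m hm
        exact (inf_comm a b).le.trans h2
    · constructor
      · rintro _ ⟨n, hn, n', hn', rfl⟩
        exact inf_le_inf (hglb.1 hn) (hglb'.1 hn')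
      · intro l hl
        refine le_inf (hglb.2 fun n hn => ?_) (hglb'.2 fun n' hn' => ?_)
        · exact le_trans (hl (Set.mem_image2_of_mem hn hNne'.some_mem)) inf_le_left
        · exact le_trans (hl (Set.mem_image2_of_mem hNne.some_mem hn')) inf_le_right

theorem stmt19_sup'_mem_subl {Y : Set L} (hY : IsSubl Y) {α : Type w} (F : Finset α)
    (hF : F.Nonempty) (f : α → L) (hf : ∀ a ∈ F, f a ∈ Y) : F.sup' hF f ∈ Y :=
  Finset.sup'_induction hF f (fun a ha b hb => (hY a ha b hb).1) hf

theorem stmt19_inf'_mem_subl {Y : Set L} (hY : IsSubl Y) {α : Type w} (F : Finset α)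
    (hF : F.Nonempty) (f : α → L) (hf : ∀ a ∈ F, f a ∈ Y) : F.inf' hF f ∈ Y :=
  Finset.inf'_induction hF f (fun a ha b hb => (hY a ha b hb).2) hf

theorem stmt19_oadh_mono {X X' : Set L} (h : X ⊆ X') : OAdh1 X ⊆ OAdh1 X' := by
  rintro x ⟨Γ, iΓ, hd, hn, f, hf, hc⟩
  exact ⟨Γ, iΓ, hd, hn, f, fun γ => h (hf γ), hc⟩

theorem stmt19_subset_oadh (X : Set L) : X ⊆ OAdh1 X := by
  intro x hx
  refine ⟨PUnit.{u+1}, inferInstance, ⟨fun a b => ⟨b, le_of_eq (Subsingleton.elim a b), le_rfl⟩⟩,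
    ⟨PUnit.unit⟩, fun _ => x, fun _ => hx, ?_⟩
  exact stmt19_oconv_const x

theorem stmt19_subset_uoadh (X : Set L) : X ⊆ UOAdh1 X := by
  intro x hx
  refine ⟨PUnit.{u+1}, inferInstance, ⟨fun a b => ⟨b, le_of_eq (Subsingleton.elim a b), le_rfl⟩⟩,
    ⟨PUnit.unit⟩, fun _ => x, fun _ => hx, fun s t _ => ?_⟩
  exact stmt19_oconv_const _

theorem stmt19_uoadh_subset_oadh2 (hL : InfDistrib L) {Z : Set L} (hZ : IsSubl Z) :
    UOAdh1 Z ⊆ OAdh1 (OAdh1 Z) := by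
  rintro x ⟨Γ, iΓ, hdir, hne, f, hf, huo⟩
  letI := iΓ
  haveI := hne
  classical
  rw [stmt19_oadh_char]
  refine ⟨{m | ∃ (F : Finset Γ) (hF : F.Nonempty), m = F.sup' hF fun δ => x ⊓ f δ},
          {n | ∃ (F : Finset Γ) (hF : F.Nonempty), n = F.inf' hF fun δ => x ⊔ f δ},
          ⟨x ⊓ f (Classical.arbitrary Γ), {Classical.arbitrary Γ},
            Finset.singleton_nonempty _, by simp⟩,
          ?_,
          ⟨x ⊔ f (Classical.arbitrary Γ), {Classical.arbitrary Γ},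
            Finset.singleton_nonempty _, by simp⟩,
          ?_, ?_, ?_, ?_⟩
  · rintro m ⟨F, hF, rfl⟩ m' ⟨G, hG, rfl⟩
    refine ⟨(F ∪ G).sup' (hF.mono Finset.subset_union_left) _,
      ⟨F ∪ G, hF.mono Finset.subset_union_left, rfl⟩, ?_, ?_⟩
    · exact Finset.sup'_le _ _ fun δ hδ =>
        Finset.le_sup' (fun δ => x ⊓ f δ) (Finset.mem_union_left G hδ)
    · exact Finset.sup'_le _ _ fun δ hδ =>
        Finset.le_sup' (fun δ => x ⊓ f δ) (Finset.mem_union_right F hδ)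
  · rintro n ⟨F, hF, rfl⟩ n' ⟨G, hG, rfl⟩
    refine ⟨(F ∪ G).inf' (hF.mono Finset.subset_union_left) _,
      ⟨F ∪ G, hF.mono Finset.subset_union_left, rfl⟩, ?_, ?_⟩
    · exact Finset.le_inf' _ _ fun δ hδ =>
        Finset.inf'_le (fun δ => x ⊔ f δ) (Finset.mem_union_left G hδ)
    · exact Finset.le_inf' _ _ fun δ hδ =>
        Finset.inf'_le (fun δ => x ⊔ f δ) (Finset.mem_union_right F hδ)
  · constructor
    · rintro m ⟨F, hF, rfl⟩
      exact Finset.sup'_le _ _ fun δ _ => inf_le_left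
    · intro u hu
      refine stmt19_uo_le_of_inf_le hL huo fun γ => ?_
      exact hu ⟨{γ}, Finset.singleton_nonempty γ, by simp⟩
  · constructor
    · rintro n ⟨F, hF, rfl⟩
      exact Finset.le_inf' _ _ fun δ _ => le_sup_left
    · intro l hl
      refine stmt19_uo_le_of_le_sup hL huo fun γ => ?_
      exact hl ⟨{γ}, Finset.singleton_nonempty γ, by simp⟩
  · rintro m ⟨F, hF, rfl⟩ n ⟨G, hG, rfl⟩
    have hbZ : F.sup' hF f ∈ Z := stmt19_sup'_mem_subl hZ F hF f fun δ _ => hf δ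
    have haZ : G.inf' hG f ∈ Z := stmt19_inf'_mem_subl hZ G hG f fun δ _ => hf δ
    have ha'Z : G.inf' hG f ⊓ F.sup' hF f ∈ Z := (hZ _ haZ _ hbZ).2
    have hconv := huo (G.inf' hG f ⊓ F.sup' hF f) (F.sup' hF f) inf_le_right
    refine ⟨(x ⊓ F.sup' hF f) ⊔ (G.inf' hG f ⊓ F.sup' hF f),
      ⟨Γ, iΓ, hdir, hne, fun γ => (f γ ⊓ F.sup' hF f) ⊔ (G.inf' hG f ⊓ F.sup' hF f),
        fun γ => (hZ _ (hZ (f γ) (hf γ) _ hbZ).2 _ ha'Z).1, hconv⟩, ?_, ?_⟩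
    · refine le_trans (Finset.sup'_le _ _ fun δ hδ => ?_) le_sup_left
      exact inf_le_inf_left x (Finset.le_sup' f hδ)
    · refine Finset.le_inf' _ _ fun ε hε => ?_
      refine sup_le (le_trans inf_le_left le_sup_left) ?_
      exact le_trans (le_trans inf_le_left (Finset.inf'_le f hε)) le_sup_right

end Aux

/-- For a sublattice `Y` of an infinitely distributive lattice satisfying Properties (A)
and (B), the 1-uO-adherence of `Y` equals its 1-O-adherence, and this set is
simultaneously O-closed and uO-closed. -/
theorem stmt19 {L : Type u} [Lattice L] (hL : InfDistrib L) (Y : Set L)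
    (hY : IsSubl Y) (hPA : PropertyA Y) (hPB : PropertyB Y) :
    UOAdh1 Y = OAdh1 Y ∧ OClosedSet (OAdh1 Y) ∧ UOClosedSet (OAdh1 Y) := by
  have hYc : Y ⊆ stmt19_Cset Y := fun y hy => stmt19_subset_cset hy
  have hCO : stmt19_Cset Y ⊆ OAdh1 Y := stmt19_cset_subset_oadh Y
  have hOC : OAdh1 Y ⊆ stmt19_Cset Y :=
    (stmt19_oadh_mono hYc).trans (stmt19_oadh_cset_subset hY hPA hPB)
  have hEq : OAdh1 Y = stmt19_Cset Y := Set.Subset.antisymm hOC hCO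
  have hsubl : IsSubl (stmt19_Cset Y) := stmt19_cset_subl hL hY
  have hOO : OAdh1 (OAdh1 Y) = OAdh1 Y := by
    apply Set.Subset.antisymm
    · rw [hEq]
      exact stmt19_oadh_cset_subset hY hPA hPB
    · exact stmt19_subset_oadh _
  have hUO1 : UOAdh1 Y = OAdh1 Y := by
    apply Set.Subset.antisymm
    · exact (stmt19_uoadh_subset_oadh2 hL hY).trans hOO.subset
    · rintro x ⟨Γ, iΓ, hd, hn, f, hf, hc⟩
      exact ⟨Γ, iΓ, hd, hn, f, hf, stmt19_oconv_uoconv hL hc⟩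
  have hUOC : UOAdh1 (OAdh1 Y) = OAdh1 Y := by
    apply Set.Subset.antisymm
    · rw [hEq]
      exact (stmt19_uoadh_subset_oadh2 hL hsubl).trans
        ((stmt19_oadh_mono (stmt19_oadh_cset_subset hY hPA hPB)).trans
          (stmt19_oadh_cset_subset hY hPA hPB))
    · exact stmt19_subset_uoadh _
  exact ⟨hUO1, hOO, hUOC⟩
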